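/- In ΣΠC with C monoidal, the composition product (∑_{i∈I} ∏_{a∈A_i} u_{i,a}) ◁ (∑_{j∈J} ∏_{b∈B_j} v_{j,b}) := ∑_{i∈I} ∏_{a∈A_i} ∑_{j∈J} ∏_{b∈B_j} (u_{i,a} · v_{j,b}) is isomorphic to ∑_{i∈I} ∑_{j̄: A_i → J} ∏_{a∈A_i} ∏_{b∈B_{j̄(a)}} (u_{i,a} · v_{j̄(a),b}). -/

import Mathlib

/-! In `FreeProd C` the product of a family is indexed by the disjoint union of the index
types, and in `FreeCoprod E` the coproduct is indexed by the Σ-type. Morphisms out of a sum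
in `FreeCoprod E` choose a summand, so a product of sums in `FreeCoprod E` is the sum, over
all choice functions, of products in `E`. For `E = FreeProd C` these constructions are, on
the nose, `compSummand` with its projections and `compTotal` with its inclusions. -/

open CategoryTheory Limits Opposite MonoidalCategory

universe v u

/-- The free product completion of a category. -/
structure FreeProd (C : Type u) [Category.{v} C] where
  ι : Type v
  obj : ι → C

instance FreeProd.category (C : Type u) [Category.{v} C] : Category.{v} (FreeProd C) where
  Hom X Y := Σ f : Y.ι → X.ι, ∀ j, X.obj (f j) ⟶ Y.obj j
  id X := ⟨fun i => i, fun _ => 𝟙 _⟩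
  comp {X Y Z} F G := ⟨fun k => F.1 (G.1 k), fun k => F.2 (G.1 k) ≫ G.2 k⟩
  id_comp F := by obtain ⟨f, g⟩ := F; dsimp; congr 1 <;> simp
  comp_id F := by obtain ⟨f, g⟩ := F; dsimp; congr 1 <;> simp
  assoc F G H := by dsimp; congr 1 <;> simp

/-- The free coproduct completion of a category. -/
structure FreeCoprod (C : Type u) [Category.{v} C] where
  ι : Type v
  obj : ι → C

instance FreeCoprod.category (C : Type u) [Category.{v} C] : Category.{v} (FreeCoprod C) where
  Hom X Y := Σ f : X.ι → Y.ι, ∀ i, X.obj i ⟶ Y.obj (f i)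
  id X := ⟨fun i => i, fun _ => 𝟙 _⟩
  comp {X Y Z} F G := ⟨fun i => G.1 (F.1 i), fun i => F.2 i ≫ G.2 (F.1 i)⟩
  id_comp F := by obtain ⟨f, g⟩ := F; dsimp; congr 1 <;> simp
  comp_id F := by obtain ⟨f, g⟩ := F; dsimp; congr 1 <;> simp
  assoc F G H := by dsimp; congr 1 <;> simp

/-- The category of polynomials in `C`: the free coproduct completion of the free product
completion of `C`. -/
abbrev SigmaPi (C : Type u) [Category.{v} C] := FreeCoprod (FreeProd C)

/-- The polynomial `∑_{i∈I} ∏_{a∈A_i} c_{i,a}` as an object of `ΣΠC`. -/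
def polyObj {C : Type u} [Category.{v} C] (I : Type v) (A : I → Type v)
    (c : ∀ i, A i → C) : SigmaPi C :=
  ⟨I, fun i => ⟨A i, c i⟩⟩

section
variable {C : Type u} [Category.{v} C] [MonoidalCategory C]
  (I : Type v) (A : I → Type v) (u : ∀ i, A i → C)
  (J : Type v) (B : J → Type v) (v : ∀ j, B j → C)

/-- `∑_{j∈J} ∏_{b∈B_j} (u_{i,a} · v_{j,b})`, the inner factor of the composition product. -/
def compFactor (i : I) (a : A i) : SigmaPi C :=
  polyObj J B (fun j b => u i a ⊗ v j b)

/-- `∑_{j̄ : A_i → J} ∏_{a∈A_i} ∏_{b∈B_{j̄ a}} (u_{i,a} · v_{j̄ a,b})`, the `i`-th summand of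
the distributed form of the composition product. -/
def compSummand (i : I) : SigmaPi C :=
  polyObj (A i → J) (fun jbar => Σ a : A i, B (jbar a))
    (fun jbar p => u i p.1 ⊗ v (jbar p.1) p.2)

/-- The projection `compSummand i ⟶ compFactor i a`. -/
def compProj (i : I) (a : A i) : compSummand I A u J B v i ⟶ compFactor I A u J B v i a :=
  ⟨fun jbar => jbar a, fun jbar => ⟨fun b => ⟨a, b⟩, fun _ => 𝟙 _⟩⟩

/-- The distributed form of the whole composition product,
`∑_{i∈I} ∑_{j̄ : A_i → J} ∏_{a∈A_i} ∏_{b∈B_{j̄ a}} (u_{i,a} · v_{j̄ a,b})`. -/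
def compTotal : SigmaPi C :=
  polyObj (Σ i : I, A i → J) (fun p => Σ a : A p.1, B (p.2 a))
    (fun p q => u p.1 q.1 ⊗ v (p.2 q.1) q.2)

/-- The inclusion `compSummand i ⟶ compTotal`. -/
def compIncl (i : I) : compSummand I A u J B v i ⟶ compTotal I A u J B v :=
  ⟨fun jbar => ⟨i, jbar⟩, fun _ => 𝟙 _⟩

section FreeCompletions

variable {D : Type u} [Category.{v} D]

lemma FreeProd.hom_ext {X Y : FreeProd D} {f g : X ⟶ Y} (h₁ : f.1 = g.1)
    (h₂ : ∀ j, f.2 j = eqToHom (by rw [h₁]) ≫ g.2 j) : f = g := by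
  obtain ⟨f₁, f₂⟩ := f
  obtain ⟨g₁, g₂⟩ := g
  obtain rfl : f₁ = g₁ := h₁
  obtain rfl : f₂ = g₂ := funext fun j => by simpa using h₂ j
  rfl

lemma FreeProd.congr_snd {X Y : FreeProd D} {f g : X ⟶ Y} (h : f = g) (j : Y.ι) :
    f.2 j = eqToHom (by rw [h]) ≫ g.2 j := by
  subst h
  simp

lemma FreeCoprod.hom_ext {X Y : FreeCoprod D} {f g : X ⟶ Y} (h₁ : f.1 = g.1)
    (h₂ : ∀ i, f.2 i ≫ eqToHom (by rw [h₁]) = g.2 i) : f = g := by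
  obtain ⟨f₁, f₂⟩ := f
  obtain ⟨g₁, g₂⟩ := g
  obtain rfl : f₁ = g₁ := h₁
  obtain rfl : f₂ = g₂ := funext fun j => by simpa using h₂ j
  rfl

lemma FreeCoprod.congr_snd {X Y : FreeCoprod D} {f g : X ⟶ Y} (h : f = g) (i : X.ι) :
    f.2 i ≫ eqToHom (by rw [h]) = g.2 i := by
  subst h
  simp

def FreeProd.sigmaFan {α : Type v} (X : α → FreeProd D) : Fan X :=
  Fan.mk ⟨Σ a, (X a).ι, fun p => (X p.1).obj p.2⟩ fun a =>
    ⟨fun j => ⟨a, j⟩, fun _ => 𝟙 _⟩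

def FreeProd.isLimitSigmaFan {α : Type v} (X : α → FreeProd D) : IsLimit (sigmaFan X) :=
  Fan.IsLimit.mk _
    (fun s => ⟨fun p => (s.proj p.1).1 p.2, fun p => (s.proj p.1).2 p.2⟩)
    -- `eqToHom` of a definitional equality is `𝟙 _` up to defeq, here and below.
    (fun _ _ => FreeProd.hom_ext rfl fun _ =>
      (Category.comp_id _).trans (Category.id_comp _).symm)
    (fun _ _ hm => FreeProd.hom_ext
      (funext fun ⟨a, j⟩ => congrFun (congrArg Sigma.fst (hm a)) j)
      fun ⟨a, j⟩ => (Category.comp_id _).symm.trans (FreeProd.congr_snd (hm a) j))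

def FreeCoprod.sigmaCofan {α : Type v} (X : α → FreeCoprod D) : Cofan X :=
  Cofan.mk ⟨Σ a, (X a).ι, fun p => (X p.1).obj p.2⟩ fun a =>
    ⟨fun i => ⟨a, i⟩, fun _ => 𝟙 _⟩

def FreeCoprod.isColimitSigmaCofan {α : Type v} (X : α → FreeCoprod D) :
    IsColimit (sigmaCofan X) :=
  Cofan.IsColimit.mk _
    (fun s => ⟨fun p => (s.inj p.1).1 p.2, fun p => (s.inj p.1).2 p.2⟩)
    (fun _ _ => FreeCoprod.hom_ext rfl fun _ =>
      (Category.comp_id _).trans (Category.id_comp _))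
    (fun _ _ hm => FreeCoprod.hom_ext
      (funext fun ⟨a, i⟩ => congrFun (congrArg Sigma.fst (hm a)) i)
      fun ⟨a, i⟩ => (congrArg (· ≫ _) (Category.id_comp _)).symm.trans
        (FreeCoprod.congr_snd (hm a) i))

def FreeCoprod.piFan {α : Type v} (X : α → FreeCoprod D)
    (P : ∀ c : ∀ a, (X a).ι, Fan fun a => (X a).obj (c a)) : Fan X :=
  Fan.mk ⟨∀ a, (X a).ι, fun c => (P c).pt⟩ fun a => ⟨fun c => c a, fun c => (P c).proj a⟩

def FreeCoprod.isLimitPiFan {α : Type v} (X : α → FreeCoprod D)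
    (P : ∀ c : ∀ a, (X a).ι, Fan fun a => (X a).obj (c a)) (hP : ∀ c, IsLimit (P c)) :
    IsLimit (piFan X P) :=
  Fan.IsLimit.mk _
    (fun s => ⟨fun t a => (s.proj a).1 t,
      fun t => Fan.IsLimit.lift (hP _) fun a => (s.proj a).2 t⟩)
    (fun s a => FreeCoprod.hom_ext rfl fun t =>
      (Category.comp_id _).trans (Fan.IsLimit.fac (hP _) _ a))
    (fun s m hm => by
      obtain ⟨m₁, m₂⟩ := m
      obtain rfl : m₁ = fun t a => (s.proj a).1 t :=
        funext fun t => funext fun a => congrFun (congrArg Sigma.fst (hm a)) t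
      refine FreeCoprod.hom_ext rfl fun t => (Category.comp_id _).trans ?_
      refine Fan.IsLimit.hom_ext (hP _) _ _ fun a => ?_
      rw [Fan.IsLimit.fac]
      exact (Category.comp_id _).symm.trans (FreeCoprod.congr_snd (hm a) t))

end FreeCompletions

/-- in `ΣΠC`, the composition product
`(∑_i ∏_a u_{i,a}) ◁ (∑_j ∏_b v_{j,b}) := ∑_i ∏_{a∈A_i} (∑_j ∏_b (u_{i,a} · v_{j,b}))`
(where the middle `∏` is the categorical product in `ΣΠC`) is isomorphic to
`∑_i ∑_{j̄ : A_i → J} ∏_a ∏_b (u_{i,a} · v_{j̄ a,b})`: for each `i` the object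
`compSummand i` with the evident projections is the product `∏_{a∈A_i} ∑_j ∏_b (u_{i,a}·v_{j,b})`,
and `compTotal` with the evident inclusions is the coproduct `∑_i compSummand i`. -/
theorem comp_product_distributes :
    (∀ i : I, Nonempty (IsLimit (Fan.mk (compSummand I A u J B v i)
      (fun a => compProj I A u J B v i a)))) ∧
    Nonempty (IsColimit (Cofan.mk (compTotal I A u J B v)
      (fun i => compIncl I A u J B v i))) :=
  ⟨fun i => ⟨FreeCoprod.isLimitPiFan (compFactor I A u J B v i) _
      fun _ => FreeProd.isLimitSigmaFan _⟩,
    ⟨FreeCoprod.isColimitSigmaCofan (compSummand I A u J B v)⟩⟩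

end
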